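/- arXiv:1607.02011 — 2 statements merged into one kernel-verified Lean document; each statement's English description precedes it below -/
import Mathlib

section
/- Let B₁, B₂ be Banach spaces and A : B₁ → B₂ a linear operator (not necessarily bounded). Then there exists a constant N > 0 and a subset F ⊆ B₁ that is dense in B₁ such that ‖A f‖ ≤ N ‖f‖ for all f ∈ F. -/
/-! By Baire, some closure of `Mₖ = {f | ‖A f‖ ≤ k‖f‖}` contains a ball `B(x₀, r)`. Differences
of points of `Mₖ ∩ B(x₀, r)` are dense in `B(0, r)` and have images of norm at most
`C = 2k(‖x₀‖ + r)`; those of norm `> r/4` thus satisfy `‖A w‖ ≤ (4C/r)‖w‖`, so the closure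
of the cone `{w | ‖A w‖ ≤ N‖w‖}` with `N > 4C/r` contains the sphere of radius `r/2`, hence
everything. -/

open Metric Set

theorem iUnion_setOf_norm_le_nat_mul_norm {E F : Type*} [NormedAddCommGroup E]
    [SeminormedAddCommGroup F] (A : E → F) (hA : A 0 = 0) :
    ⋃ k : ℕ, {f | ‖A f‖ ≤ k * ‖f‖} = univ := by
  refine eq_univ_of_forall fun f => mem_iUnion.2 ?_
  rcases (norm_nonneg f).eq_or_lt with hf | hf
  · exact ⟨0, by simp [norm_eq_zero.1 hf.symm, hA]⟩
  · exact ⟨⌈‖A f‖ / ‖f‖⌉₊, (div_le_iff₀ hf).1 (Nat.le_ceil _)⟩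

theorem exists_ball_subset_closure_setOf_norm_le_nat_mul_norm {E F : Type*}
    [NormedAddCommGroup E] [CompleteSpace E] [SeminormedAddCommGroup F] (A : E → F)
    (hA : A 0 = 0) :
    ∃ (k : ℕ) (x₀ : E) (r : ℝ), 0 < r ∧ ball x₀ r ⊆ closure {f | ‖A f‖ ≤ k * ‖f‖} := by
  have hcover : ⋃ k : ℕ, closure {f | ‖A f‖ ≤ k * ‖f‖} = univ :=
    eq_univ_of_subset (iUnion_mono fun _ => subset_closure) (iUnion_setOf_norm_le_nat_mul_norm A hA)
  obtain ⟨k, x₀, hx₀⟩ := nonempty_interior_of_iUnion_of_closed (fun _ => isClosed_closure) hcover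
  obtain ⟨r, hr, hball⟩ := isOpen_iff.1 isOpen_interior x₀ hx₀
  exact ⟨k, x₀, r, hr, hball.trans interior_subset⟩

theorem norm_map_sub_le_of_mem_ball {E F 𝓕 : Type*} [SeminormedAddCommGroup E]
    [SeminormedAddCommGroup F] [FunLike 𝓕 E F] [AddMonoidHomClass 𝓕 E F] (A : 𝓕) {k r : ℝ}
    {x₀ u v : E} (hk : 0 ≤ k) (hu : u ∈ ball x₀ r) (hAu : ‖A u‖ ≤ k * ‖u‖) (hv : v ∈ ball x₀ r)
    (hAv : ‖A v‖ ≤ k * ‖v‖) : ‖A (u - v)‖ ≤ 2 * k * (‖x₀‖ + r) := by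
  have hu' : ‖u‖ ≤ ‖x₀‖ + r := by linarith [norm_le_insert' u x₀, (mem_ball_iff_norm.1 hu).le]
  have hv' : ‖v‖ ≤ ‖x₀‖ + r := by linarith [norm_le_insert' v x₀, (mem_ball_iff_norm.1 hv).le]
  calc ‖A (u - v)‖ = ‖A u - A v‖ := by rw [map_sub]
    _ ≤ ‖A u‖ + ‖A v‖ := norm_sub_le _ _
    _ ≤ k * ‖u‖ + k * ‖v‖ := add_le_add hAu hAv
    _ ≤ 2 * k * (‖x₀‖ + r) := by nlinarith

theorem ball_zero_subset_closure_setOf_norm_le {E F 𝓕 : Type*} [SeminormedAddCommGroup E]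
    [SeminormedAddCommGroup F] [FunLike 𝓕 E F] [AddMonoidHomClass 𝓕 E F] (A : 𝓕) {k r : ℝ}
    {x₀ : E} (hk : 0 ≤ k) (h : ball x₀ r ⊆ closure {f | ‖A f‖ ≤ k * ‖f‖}) :
    ball 0 r ⊆ closure {w | ‖A w‖ ≤ 2 * k * (‖x₀‖ + r)} := by
  intro y hy
  have hr : 0 < r := (norm_nonneg y).trans_lt (mem_ball_zero_iff.1 hy)
  have hnear : ball x₀ r ⊆ closure (ball x₀ r ∩ {f | ‖A f‖ ≤ k * ‖f‖}) := fun x hx =>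
    isOpen_ball.inter_closure ⟨hx, h hx⟩
  have hx₀y : x₀ + y ∈ ball x₀ r := by simpa [mem_ball_iff_norm] using hy
  simpa using map_mem_closure₂ continuous_sub (hnear hx₀y) (hnear (mem_ball_self hr))
    fun u hu v hv => norm_map_sub_le_of_mem_ball A hk hu.1 hu.2 hv.1 hv.2

theorem sphere_subset_closure_setOf_norm_le_mul_norm {E F : Type*} [SeminormedAddCommGroup E]
    [SeminormedAddCommGroup F] (A : E → F) {r C N : ℝ} (hr : 0 < r) (hN : 0 ≤ N)
    (hCN : C ≤ N * (r / 4)) (h : ball 0 r ⊆ closure {w | ‖A w‖ ≤ C}) :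
    sphere 0 (r / 2) ⊆ closure {w | ‖A w‖ ≤ N * ‖w‖} := by
  intro f hf
  have hf' : ‖f‖ = r / 2 := mem_sphere_zero_iff_norm.1 hf
  have hf_ball : f ∈ ball 0 r := mem_ball_zero_iff.2 (by linarith)
  refine closure_mono ?_ (isOpen_ball.inter_closure ⟨mem_ball_self (ε := r / 4) (by positivity), h hf_ball⟩)
  rintro w ⟨hw, hAw⟩
  have hw' : r / 4 ≤ ‖w‖ := by
    linarith [norm_sub_norm_le f w, (mem_ball_iff_norm'.1 hw).le]
  calc ‖A w‖ ≤ C := hAw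
    _ ≤ N * (r / 4) := hCN
    _ ≤ N * ‖w‖ := mul_le_mul_of_nonneg_left hw' hN

theorem dense_of_sphere_subset_closure {E : Type*} [NormedAddCommGroup E] [NormedSpace ℝ E]
    {S : Set E} {ρ : ℝ} (hρ : 0 < ρ) (hS : ∀ (c : ℝ), ∀ x ∈ S, c • x ∈ S) (h0 : (0 : E) ∈ S)
    (h : sphere 0 ρ ⊆ closure S) : Dense S := by
  have hcone : ∀ (c : ℝ), ∀ x ∈ closure S, c • x ∈ closure S := fun c x hx =>
    closure_mono (smul_set_subset_iff.2 (hS c)) (smul_closure_subset c S (smul_mem_smul_set hx))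
  intro x
  rcases (norm_nonneg x).eq_or_lt with hx | hx
  · exact norm_eq_zero.1 hx.symm ▸ subset_closure h0
  have hscaled : (ρ / ‖x‖) • x ∈ sphere (0 : E) ρ := by
    rw [mem_sphere_zero_iff_norm, norm_smul, Real.norm_of_nonneg (by positivity),
      div_mul_cancel₀ _ hx.ne']
  simpa [smul_smul, hx.ne', hρ.ne'] using hcone (‖x‖ / ρ) _ (h hscaled)

theorem smul_mem_setOf_norm_le_mul_norm {𝕜 E F : Type*} [NormedField 𝕜]
    [SeminormedAddCommGroup E] [NormedSpace 𝕜 E] [SeminormedAddCommGroup F] [NormedSpace 𝕜 F]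
    (A : E →ₗ[𝕜] F) {N : ℝ} (c : 𝕜) {x : E} (hx : ‖A x‖ ≤ N * ‖x‖) :
    ‖A (c • x)‖ ≤ N * ‖c • x‖ := by
  rw [map_smul, norm_smul, norm_smul, mul_left_comm]
  exact mul_le_mul_of_nonneg_left hx (norm_nonneg c)

theorem stmt0_general {B₁ B₂ : Type*} [NormedAddCommGroup B₁] [NormedSpace ℝ B₁] [CompleteSpace B₁]
    [NormedAddCommGroup B₂] [NormedSpace ℝ B₂]
    (A : B₁ →ₗ[ℝ] B₂) :
    ∃ (N : ℝ) (F : Set B₁), 0 < N ∧ Dense F ∧ ∀ f ∈ F, ‖A f‖ ≤ N * ‖f‖ := by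
  obtain ⟨k, x₀, r, hr, hball⟩ :=
    exists_ball_subset_closure_setOf_norm_le_nat_mul_norm A (map_zero A)
  set C := 2 * k * (‖x₀‖ + r)
  have hC : 0 ≤ C := by positivity
  set N := 4 * C / r + 1
  have hCN : C ≤ N * (r / 4) := by
    have : N * (r / 4) = C + r / 4 := by simp only [N]; field_simp
    linarith
  refine ⟨N, {f | ‖A f‖ ≤ N * ‖f‖}, by positivity, ?_, fun f hf => hf⟩
  refine dense_of_sphere_subset_closure (half_pos hr)
    (fun c x hx => smul_mem_setOf_norm_le_mul_norm A c hx) (by simp) ?_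
  exact sphere_subset_closure_setOf_norm_le_mul_norm A hr (by positivity) hCN
    (ball_zero_subset_closure_setOf_norm_le A k.cast_nonneg hball)

theorem stmt0 {B₁ B₂ : Type*} [NormedAddCommGroup B₁] [NormedSpace ℝ B₁] [CompleteSpace B₁]
    [NormedAddCommGroup B₂] [NormedSpace ℝ B₂] [CompleteSpace B₂]
    (A : B₁ →ₗ[ℝ] B₂) :
    ∃ (N : ℝ) (F : Set B₁), 0 < N ∧ Dense F ∧ ∀ f ∈ F, ‖A f‖ ≤ N * ‖f‖ :=
  stmt0_general A
end

section
/- Let H be an RKHS with bounded kernel (sup k(z,z) ≤ κ) on a finite set Z, let μ = E_P[φ(Z)] for a probability measure P, let β₁,…,β_n ∈ ℝ and μ̂ = ∑ β_i φ(z_i) with z_i ∈ Z. Suppose g ∈ H is the indicator of the set {z_i : β_i < 0} among sample points (g(z_i) = 1 if β_i < 0, else 0, and g ≥ 0 on Z) with ‖g‖ ≤ b. If ‖μ̂ − μ‖ ≤ ε, then ∑_i β_i⁻ ≤ ε b, where β_i⁻ = max(0,−β_i). -/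
open MeasureTheory

lemma mul_ite_neg_eq_neg_max_zero_neg (x : ℝ) :
    x * (if x < 0 then 1 else 0) = -max 0 (-x) := by
  split_ifs with hx
  · rw [max_eq_right (by linarith)]; ring
  · rw [max_eq_left (by linarith)]; ring

lemma inner_integral_nonneg {Z H : Type*} [MeasurableSpace Z] [NormedAddCommGroup H]
    [InnerProductSpace ℝ H] [CompleteSpace H] {P : Measure Z} {φ : Z → H}
    (hφ : Integrable φ P) {g : H} (hg : ∀ w, 0 ≤ (inner ℝ g (φ w) : ℝ)) :
    0 ≤ (inner ℝ g (∫ w, φ w ∂P) : ℝ) := by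
  rw [← integral_inner hφ g]
  exact integral_nonneg hg

lemma neg_mul_le_inner_of_norm_sub_le {H : Type*} [NormedAddCommGroup H]
    [InnerProductSpace ℝ H] {g x μ : H} {b ε : ℝ} (hμ : 0 ≤ (inner ℝ g μ : ℝ))
    (hg : ‖g‖ ≤ b) (hx : ‖x - μ‖ ≤ ε) :
    -(ε * b) ≤ (inner ℝ g x : ℝ) := by
  have hcs : |(inner ℝ g (x - μ) : ℝ)| ≤ ε * b :=
    calc |(inner ℝ g (x - μ) : ℝ)| ≤ ‖g‖ * ‖x - μ‖ := abs_real_inner_le_norm g _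
      _ ≤ b * ε := mul_le_mul hg hx (norm_nonneg _) ((norm_nonneg g).trans hg)
      _ = ε * b := mul_comm b ε
  rw [inner_sub_right] at hcs
  linarith [neg_le_of_abs_le hcs]

theorem stmt13_general {Z H : Type*} [MeasurableSpace Z] [NormedAddCommGroup H]
    [InnerProductSpace ℝ H] [CompleteSpace H]
    (P : Measure Z)
    (φ : Z → H) (hφ : Integrable φ P)
    (g : H) (G : Z → ℝ) (hrepr : ∀ z, (inner ℝ g (φ z) : ℝ) = G z)
    (hGpos : ∀ z, 0 ≤ G z)
    (b : ℝ) (hg : ‖g‖ ≤ b)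
    (n : ℕ) (β : Fin n → ℝ) (z : Fin n → Z)
    (hind : ∀ i, G (z i) = if β i < 0 then 1 else 0)
    (ε : ℝ) (hclose : ‖(∑ i, β i • φ (z i)) - ∫ w, φ w ∂P‖ ≤ ε) :
    ∑ i, max 0 (-β i) ≤ ε * b := by
  have hμ : 0 ≤ (inner ℝ g (∫ w, φ w ∂P) : ℝ) :=
    inner_integral_nonneg hφ fun w => hrepr w ▸ hGpos w
  have hμh : (inner ℝ g (∑ i, β i • φ (z i)) : ℝ) = -∑ i, max 0 (-β i) := by
    simp only [inner_sum, real_inner_smul_right, hrepr, hind,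
      mul_ite_neg_eq_neg_max_zero_neg, Finset.sum_neg_distrib]
  linarith [neg_mul_le_inner_of_norm_sub_le hμ hg hclose]

theorem stmt13 {Z H : Type*} [MeasurableSpace Z] [NormedAddCommGroup H]
    [InnerProductSpace ℝ H] [CompleteSpace H]
    (P : Measure Z) [IsProbabilityMeasure P]
    (φ : Z → H) (hφ : Integrable φ P)
    (g : H) (G : Z → ℝ) (hrepr : ∀ z, (inner ℝ g (φ z) : ℝ) = G z)
    (hGpos : ∀ z, 0 ≤ G z)
    (b : ℝ) (hg : ‖g‖ ≤ b)
    (n : ℕ) (β : Fin n → ℝ) (z : Fin n → Z)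
    (hind : ∀ i, G (z i) = if β i < 0 then 1 else 0)
    (ε : ℝ) (hclose : ‖(∑ i, β i • φ (z i)) - ∫ w, φ w ∂P‖ ≤ ε) :
    ∑ i, max 0 (-β i) ≤ ε * b :=
  stmt13_general P φ hφ g G hrepr hGpos b hg n β z hind ε hclose
end
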